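/- arXiv:2003.12543 — 4 statements merged into one kernel-verified Lean document; each statement's English description precedes it below -/
import Mathlib

section
/- If A is a symmetric n×n complex matrix of rank exactly 1, then A + Aᵀ = 2A has rank 1, and the unique rank-≤1 matrix B with B + Bᵀ = 2A is B = A; thus Φ is injective on symmetric rank-1 matrices (char 0). -/
open Matrix

/-- All 2×2 minors of a matrix of rank at most 1 vanish. -/
lemma minor_vanish {n : ℕ} (M : Matrix (Fin n) (Fin n) ℂ) (h : M.rank ≤ 1)
    (i j k l : Fin n) : M i j * M k l = M i l * M k j := by
  have hfr : Module.finrank ℂ (LinearMap.range M.mulVecLin) ≤ 1 := h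
  have hprin : (LinearMap.range M.mulVecLin).IsPrincipal :=
    (Submodule.finrank_le_one_iff_isPrincipal _).mp hfr
  obtain ⟨v, hv⟩ := hprin
  have hcol : ∀ c : Fin n, ∃ d : ℂ, (fun r => M r c) = d • v := by
    intro c
    have hmem : (fun r => M r c) ∈ LinearMap.range M.mulVecLin := by
      refine ⟨Pi.single c 1, ?_⟩
      ext r
      simp [Matrix.mulVecLin_apply, Matrix.mulVec_single]
    rw [hv, Submodule.mem_span_singleton] at hmem
    obtain ⟨d, hd⟩ := hmem
    exact ⟨d, hd.symm⟩
  obtain ⟨dj, hdj⟩ := hcol j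
  obtain ⟨dl, hdl⟩ := hcol l
  have h1 : M i j = dj * v i := congrFun hdj i
  have h2 : M k j = dj * v k := congrFun hdj k
  have h3 : M i l = dl * v i := congrFun hdl i
  have h4 : M k l = dl * v k := congrFun hdl k
  rw [h1, h2, h3, h4]; ring

/-- If `A` is a symmetric `n × n` complex matrix of rank exactly `1`, then
`A + Aᵀ = 2A` has rank `1`, and the unique matrix `B` of rank at most `1` with
`B + Bᵀ = 2A` is `B = A`; thus `Φ(B) = B + Bᵀ` is injective on symmetric
rank-one matrices. -/
theorem stmt12 (n : ℕ) (A : Matrix (Fin n) (Fin n) ℂ)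
    (hA : A.IsSymm) (hrk : A.rank = 1) :
    A + Aᵀ = (2 : ℂ) • A ∧ (A + Aᵀ).rank = 1 ∧
    (∀ B : Matrix (Fin n) (Fin n) ℂ, B.rank ≤ 1 → B + Bᵀ = (2 : ℂ) • A → B = A) := by
  have hAT : Aᵀ = A := hA
  have heq : A + Aᵀ = (2 : ℂ) • A := by rw [hAT, two_smul]
  refine ⟨heq, ?_, ?_⟩
  · -- rank of 2 • A equals rank of A
    rw [heq]
    have hml : ((2 : ℂ) • A).mulVecLin = (2 : ℂ) • A.mulVecLin := by
      apply LinearMap.ext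
      intro x
      simp [Matrix.mulVecLin_apply, smul_mulVec]
    have : ((2 : ℂ) • A).rank = A.rank := by
      unfold Matrix.rank
      rw [hml, LinearMap.range_smul _ _ (by norm_num : (2:ℂ) ≠ 0)]
    rw [this, hrk]
  · intro B hB hB2
    -- A has rank ≤ 1, so its minors vanish
    have hArk : A.rank ≤ 1 := le_of_eq hrk
    have hent : ∀ i j : Fin n, B i j + B j i = 2 * A i j := by
      intro i j
      have := congrFun (congrFun hB2 i) j
      simpa [Matrix.add_apply, Matrix.transpose_apply, Matrix.smul_apply] using this
    have hAsym : ∀ i j : Fin n, A j i = A i j := by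
      intro i j
      exact (congrFun (congrFun hAT i) j)
    have hdiag : ∀ i : Fin n, B i i = A i i := by
      intro i
      have := hent i i
      have h2 : (2 : ℂ) * B i i = 2 * A i i := by linear_combination this
      field_simp at h2
      exact h2
    have hsym : ∀ i j : Fin n, B j i = B i j := by
      intro i j
      have mB := minor_vanish B hB i j j i
      have mA := minor_vanish A hArk i j j i
      -- (B i j - B j i)^2 = (B i j + B j i)^2 - 4 B i j B j i
      --                   = 4 A i j ^2 - 4 A i i A j j = 0
      have h1 := hent i j
      rw [hdiag i, hdiag j] at mB
      rw [hAsym i j] at mA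
      have e1 : (B i j + B j i) ^ 2 = 4 * A i j ^ 2 := by rw [h1]; ring
      have key : (B i j - B j i) ^ 2 = 0 := by
        linear_combination e1 - 4 * mB + 4 * mA
      have := pow_eq_zero_iff (n := 2) (by norm_num) |>.mp key
      exact (sub_eq_zero.mp this).symm
    ext i j
    have h1 := hent i j
    have h2 := hsym i j
    have h3 : (2:ℂ) * B i j = 2 * A i j := by linear_combination h1 - h2
    exact mul_left_cancel₀ (by norm_num : (2:ℂ) ≠ 0) h3
end

section
/- With B = E₂₁ (rank 1) and A = E₁₂ + E₂₁ = Φ(B), the differential of Φ(X) = X + Xᵀ at B maps the tangent space T_B Σ₁ = {C : C(ker B) ⊆ im B} surjectively onto the tangent space T_A S₂ = {D symmetric : D(ker A) ⊆ im A}. Hence Φ: Σ₁∖S₁ → S₂∖S₁ is a local diffeomorphism at B. -/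
/-!
In coordinates, `C(ker B) ⊆ im B` for `B = E₁₀` says that `C` is supported on row `1` and
column `0`, and `D(ker A) ⊆ im A` for `A = E₀₁ + E₁₀` says that `D` vanishes on the block
indexed by the remaining coordinates. Then `C + Cᵀ` clearly vanishes on that block. Conversely a
symmetric such `D` is `C + Cᵀ` for the `C` that keeps each entry of `D` lying in row `1` or
column `0`, halved when its mirror entry lies there too.
-/

open Matrix

namespace Matrix

variable {ι K : Type*}

section CommSemiring

variable [Fintype ι] [DecidableEq ι]

def MapsKerToRange [CommSemiring K] (M C : Matrix ι ι K) : Prop :=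
  ∀ v, M *ᵥ v = 0 → C *ᵥ v ∈ LinearMap.range M.mulVecLin

theorem forall_mulVec_apply_eq_zero_iff [Semiring K] (C : Matrix ι ι K) (S T : Set ι) :
    (∀ v : ι → K, (∀ j ∈ S, v j = 0) → ∀ i ∉ T, (C *ᵥ v) i = 0) ↔
      ∀ i j, i ∉ T → j ∉ S → C i j = 0 := by
  refine ⟨fun h i j hi hj => ?_, fun h v hv i hi => ?_⟩
  · simpa using
      h (Pi.single j 1) (fun k hk => Pi.single_eq_of_ne (ne_of_mem_of_not_mem hk hj) _) i hi
  · refine Finset.sum_eq_zero fun j _ => ?_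
    by_cases hj : j ∈ S
    · simp [hv j hj]
    · simp [h i j hi hj]

variable [CommSemiring K]

theorem single_one_mulVec (r c : ι) (v : ι → K) :
    single r c (1 : K) *ᵥ v = Pi.single r (v c) := by
  rw [single_mulVec, one_mul]; rfl

theorem single_one_mulVec_eq_zero_iff (r c : ι) (v : ι → K) :
    single r c (1 : K) *ᵥ v = 0 ↔ v c = 0 := by
  rw [single_one_mulVec, Pi.single_eq_zero_iff]

theorem mem_range_single_mulVecLin_iff (r c : ι) (u : ι → K) :
    u ∈ LinearMap.range (single r c (1 : K)).mulVecLin ↔ ∀ i ≠ r, u i = 0 := by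
  simp only [LinearMap.mem_range, mulVecLin_apply, single_one_mulVec]
  refine ⟨?_, fun h => ⟨Pi.single c (u r), ?_⟩⟩
  · rintro ⟨w, rfl⟩ i hi
    simp [hi]
  · ext i
    by_cases hi : i = r
    · subst hi; simp
    · simp [hi, h i hi]

theorem single_add_single_mulVec (r c : ι) (v : ι → K) :
    (single r c (1 : K) + single c r 1) *ᵥ v = Pi.single r (v c) + Pi.single c (v r) := by
  rw [add_mulVec, single_one_mulVec, single_one_mulVec]

theorem mapsKerToRange_single_iff (r c : ι) (C : Matrix ι ι K) :
    MapsKerToRange (single r c 1) C ↔ ∀ i j, i ≠ r → j ≠ c → C i j = 0 := by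
  simp only [MapsKerToRange, single_one_mulVec_eq_zero_iff, mem_range_single_mulVecLin_iff]
  simpa using forall_mulVec_apply_eq_zero_iff C {c} {r}

variable {r c : ι}

theorem single_add_single_mulVec_eq_zero_iff (hrc : r ≠ c) (v : ι → K) :
    (single r c (1 : K) + single c r 1) *ᵥ v = 0 ↔ v r = 0 ∧ v c = 0 := by
  rw [single_add_single_mulVec, funext_iff]
  refine ⟨fun h => ⟨by simpa [hrc] using h c, by simpa [hrc] using h r⟩, ?_⟩
  rintro ⟨hr, hc⟩
  simp [hr, hc]

theorem mem_range_single_add_single_mulVecLin_iff (hrc : r ≠ c) (u : ι → K) :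
    u ∈ LinearMap.range (single r c (1 : K) + single c r 1).mulVecLin ↔
      ∀ i, i ≠ r → i ≠ c → u i = 0 := by
  simp only [LinearMap.mem_range, mulVecLin_apply, single_add_single_mulVec]
  refine ⟨?_, fun h => ⟨Pi.single r (u c) + Pi.single c (u r), ?_⟩⟩
  · rintro ⟨w, rfl⟩ i hr hc
    simp [hr, hc]
  · ext i
    by_cases hr : i = r
    · subst hr; simp [hrc]
    by_cases hc : i = c
    · subst hc; simp [hrc.symm]
    simp [hr, hc, h i hr hc]

theorem mapsKerToRange_single_add_single_iff (hrc : r ≠ c) (D : Matrix ι ι K) :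
    MapsKerToRange (single r c 1 + single c r 1) D ↔
      ∀ i j, i ≠ r → i ≠ c → j ≠ r → j ≠ c → D i j = 0 := by
  simp only [MapsKerToRange, single_add_single_mulVec_eq_zero_iff hrc,
    mem_range_single_add_single_mulVecLin_iff hrc]
  simpa [and_imp] using forall_mulVec_apply_eq_zero_iff D {r, c} {r, c}

end CommSemiring

section DivisionSemiring

variable [DivisionSemiring K] (P : ι → ι → Prop) [DecidableRel P]

def symmSplit (D : Matrix ι ι K) : Matrix ι ι K :=
  of fun i j => if P i j then (if P j i then D i j / 2 else D i j) else 0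

variable {P}

theorem symmSplit_apply_of_not {i j : ι} (h : ¬P i j) (D : Matrix ι ι K) :
    symmSplit P D i j = 0 := by
  simp [symmSplit, h]

theorem symmSplit_add_transpose [NeZero (2 : K)] {D : Matrix ι ι K} (hD : D.IsSymm)
    (h : ∀ i j, ¬P i j → ¬P j i → D i j = 0) : symmSplit P D + (symmSplit P D)ᵀ = D := by
  ext i j
  simp only [symmSplit, add_apply, transpose_apply, of_apply, hD.apply i j]
  by_cases hij : P i j <;> by_cases hji : P j i <;> simp [hij, hji, h i j]

end DivisionSemiring

section Tangent

variable [Fintype ι] [DecidableEq ι] {r c : ι}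

theorem mapsKerToRange_add_transpose [CommSemiring K] (hrc : r ≠ c) {C : Matrix ι ι K}
    (hC : MapsKerToRange (single r c 1) C) :
    MapsKerToRange (single c r 1 + single r c 1) (C + Cᵀ) := by
  have hC := (mapsKerToRange_single_iff r c C).1 hC
  refine (mapsKerToRange_single_add_single_iff hrc.symm _).2 fun i j hic hir hjc hjr => ?_
  simp [hC i j hir hjc, hC j i hjr hic]

theorem exists_mapsKerToRange_add_transpose_eq [Semifield K] [NeZero (2 : K)] (hrc : r ≠ c)
    {D : Matrix ι ι K} (hD : D.IsSymm) (hDA : MapsKerToRange (single c r 1 + single r c 1) D) :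
    ∃ C, MapsKerToRange (single r c 1) C ∧ C + Cᵀ = D := by
  have hDA := (mapsKerToRange_single_add_single_iff hrc.symm D).1 hDA
  refine ⟨symmSplit (fun i j => i = r ∨ j = c) D, ?_, symmSplit_add_transpose hD ?_⟩
  · exact (mapsKerToRange_single_iff r c _).2 fun i j hi hj =>
      symmSplit_apply_of_not (by tauto) D
  · intro i j hij hji
    push Not at hij hji
    exact hDA i j hji.2 hij.1 hij.2 hji.1

end Tangent

end Matrix

/-- With `B = E₂₁` and `A = E₁₂ + E₂₁ = Φ(B)` (on `Fin (n+2)`), the differential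
`C ↦ C + Cᵀ` of `Φ(X) = X + Xᵀ` maps the tangent space
`T_B Σ₁ = {C : C(ker B) ⊆ im B}` surjectively onto the tangent space
`T_A S₂ = {D symmetric : D(ker A) ⊆ im A}`. -/
theorem stmt14 (n : ℕ)
    (Bm Am : Matrix (Fin (n + 2)) (Fin (n + 2)) ℂ)
    (hBm : Bm = single 1 0 (1 : ℂ))
    (hAm : Am = single 0 1 (1 : ℂ) + single 1 0 (1 : ℂ)) :
    (∀ C : Matrix (Fin (n + 2)) (Fin (n + 2)) ℂ,
      (∀ v, Bm.mulVec v = 0 → C.mulVec v ∈ LinearMap.range Bm.mulVecLin) →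
      (C + Cᵀ).IsSymm ∧
        ∀ v, Am.mulVec v = 0 → (C + Cᵀ).mulVec v ∈ LinearMap.range Am.mulVecLin) ∧
    (∀ D : Matrix (Fin (n + 2)) (Fin (n + 2)) ℂ, D.IsSymm →
      (∀ v, Am.mulVec v = 0 → D.mulVec v ∈ LinearMap.range Am.mulVecLin) →
      ∃ C : Matrix (Fin (n + 2)) (Fin (n + 2)) ℂ,
        (∀ v, Bm.mulVec v = 0 → C.mulVec v ∈ LinearMap.range Bm.mulVecLin) ∧
        C + Cᵀ = D) := by
  subst hBm hAm
  exact ⟨fun C hC => ⟨isSymm_add_transpose_self C, mapsKerToRange_add_transpose one_ne_zero hC⟩,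
    fun D hD hDA => exists_mapsKerToRange_add_transpose_eq one_ne_zero hD hDA⟩
end

section
/- Let M be a symmetric matrix of symbols m_{ij} = m_{ji} and let T be a symmetric matrix of indeterminates T_{ij} = T_{ji}. Then the entries of T·M lie in the kernel of the map sending T_{ij} to the vector of partial derivatives (∂Δ_q/∂m_{ij})_q of all (r+1)×(r+1) minors Δ_q, restricted to the locus where all Δ_q vanish; i.e., T·M = 0 gives equations of Projan of the Rees algebra of the normal module of S_r. -/
open MvPolynomial Matrix Finset

variable {n : ℕ}

private abbrev PP (n : ℕ) := MvPolynomial (Fin n × Fin n) ℂ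

private lemma pderiv_intCast_mul (p : Fin n × Fin n) (k : ℤ) (f : PP n) :
    pderiv p ((k : PP n) * f) = (k : PP n) * pderiv p f := by
  have h : ((k : PP n)) = C ((k : ℂ)) := by
    simp
  rw [h, pderiv_C_mul]

private lemma pderiv_finset_prod {ι : Type*} [DecidableEq ι] (p : Fin n × Fin n)
    (s : Finset ι) (f : ι → PP n) :
    pderiv p (∏ j ∈ s, f j) = ∑ j ∈ s, pderiv p (f j) * ∏ k ∈ s.erase j, f k := by
  induction s using Finset.induction with
  | empty => simp
  | @insert a s ha ih =>
    rw [Finset.prod_insert ha, pderiv_mul, ih, Finset.sum_insert ha, Finset.erase_insert ha]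
    rw [Finset.mul_sum]
    congr 1
    refine Finset.sum_congr rfl fun j hj => ?_
    rw [Finset.erase_insert_of_ne (by rintro rfl; exact ha hj),
      Finset.prod_insert (fun h => ha (Finset.mem_of_mem_erase h))]
    ring

private lemma pderiv_det_row {m : ℕ} (p : Fin n × Fin n) (A : Matrix (Fin m) (Fin m) (PP n)) :
    pderiv p A.det = ∑ a, (A.updateRow a fun b => pderiv p (A a b)).det := by
  simp only [det_apply']
  rw [map_sum, Finset.sum_comm]
  refine Finset.sum_congr rfl fun τ _ => ?_
  rw [show (Equiv.Perm.sign τ : PP n) * ∏ j, A (τ j) j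
      = ((Equiv.Perm.sign τ : ℤ) : PP n) * ∏ j, A (τ j) j by ring]
  rw [pderiv_intCast_mul, pderiv_finset_prod]
  rw [← Equiv.sum_comp τ (fun a => (Equiv.Perm.sign τ : PP n) *
        ∏ j, (A.updateRow a fun b => pderiv p (A a b)) (τ j) j)]
  rw [Finset.mul_sum]
  refine Finset.sum_congr rfl fun j _ => ?_
  congr 1
  rw [← Finset.mul_prod_erase Finset.univ _ (Finset.mem_univ j)]
  congr 1
  · rw [Matrix.updateRow_self]
  · refine Finset.prod_congr rfl fun k hk => ?_
    rw [Matrix.updateRow_ne (τ.injective.ne (Finset.ne_of_mem_erase hk))]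

private lemma pderiv_det_col {m : ℕ} (p : Fin n × Fin n) (A : Matrix (Fin m) (Fin m) (PP n)) :
    pderiv p A.det = ∑ b, (A.updateCol b fun a => pderiv p (A a b)).det := by
  rw [← Matrix.det_transpose A, pderiv_det_row]
  refine Finset.sum_congr rfl fun b _ => ?_
  rw [← Matrix.det_transpose (A.updateCol b fun a => pderiv p (A a b))]
  congr 1
  rw [← Matrix.updateRow_transpose]
  rfl

private lemma det_updateCol_sum' {m : ℕ} {R : Type*} [CommRing R]
    (A : Matrix (Fin m) (Fin m) R) (b : Fin m) {κ : Type*} [DecidableEq κ] (s : Finset κ) (v : κ → Fin m → R) :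
    (A.updateCol b (∑ t ∈ s, v t)).det = ∑ t ∈ s, (A.updateCol b (v t)).det := by
  induction s using Finset.induction with
  | empty =>
    simp only [Finset.sum_empty]
    exact Matrix.det_eq_zero_of_column_eq_zero b (fun a => by simp)
  | @insert a s ha ih =>
    rw [Finset.sum_insert ha, Matrix.det_updateCol_add, ih, Finset.sum_insert ha]

private lemma det_updateRow_sum' {m : ℕ} {R : Type*} [CommRing R]
    (A : Matrix (Fin m) (Fin m) R) (b : Fin m) {κ : Type*} [DecidableEq κ] (s : Finset κ) (v : κ → Fin m → R) :
    (A.updateRow b (∑ t ∈ s, v t)).det = ∑ t ∈ s, (A.updateRow b (v t)).det := by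
  induction s using Finset.induction with
  | empty =>
    simp only [Finset.sum_empty]
    exact Matrix.det_eq_zero_of_row_eq_zero b (fun a => by simp)
  | @insert a s ha ih =>
    rw [Finset.sum_insert ha, Matrix.det_updateRow_add, ih, Finset.sum_insert ha]

private lemma det_mem_of_row {m : ℕ} {R : Type*} [CommRing R] {I : Ideal R}
    (A : Matrix (Fin m) (Fin m) R) (a : Fin m) (h : ∀ b, A a b ∈ I) : A.det ∈ I := by
  rw [Matrix.det_apply']
  refine Ideal.sum_mem _ fun σ _ => Ideal.mul_mem_left _ _ ?_
  rw [← Finset.mul_prod_erase Finset.univ _ (Finset.mem_univ (σ⁻¹ a))]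
  refine Ideal.mul_mem_right _ _ ?_
  simpa using h (σ⁻¹ a)

/-- Let `M = (m_{ab})` be the generic `n × n` matrix of indeterminates, regarded
as symmetric via the relations `m_{ab} - m_{ba}`, and let `Δ` be any
`(r+1) × (r+1)` minor of `M`. The entries of `T·M`, for `T` the symmetric matrix
of indeterminates mapping to the symmetric partial-derivative generators
`T_{t i} ↦ ∂Δ/∂m_{t i} + ∂Δ/∂m_{i t}` of the normal module, lie in the kernel of
the Rees-algebra map: for all columns `i`, `s`,
`∑ₜ m_{t s}·(∂Δ/∂m_{t i} + ∂Δ/∂m_{i t})` lies in the ideal generated by all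
`(r+1) × (r+1)` minors of `M` together with the symmetry relations
`m_{ab} - m_{ba}`; i.e. `T·M = 0` gives equations of `Projan 𝓡(N(S_r))`. -/
theorem stmt16 (n r : ℕ)
    (M : Matrix (Fin n) (Fin n) (MvPolynomial (Fin n × Fin n) ℂ))
    (hM : M = Matrix.of fun a b => (X (a, b) : MvPolynomial (Fin n × Fin n) ℂ))
    (ρ₀ κ₀ : Fin (r + 1) → Fin n) (i s : Fin n) :
    (∑ t : Fin n, M t s *
        (pderiv (t, i) (M.submatrix ρ₀ κ₀).det + pderiv (i, t) (M.submatrix ρ₀ κ₀).det))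
      ∈ Ideal.span
          ({p | ∃ ρ κ : Fin (r + 1) → Fin n, p = (M.submatrix ρ κ).det} ∪
           {p | ∃ a b : Fin n, p = X (a, b) - X (b, a)}) := by
  subst hM
  set I : Ideal (PP n) := Ideal.span _ with hI
  set G : Matrix (Fin n) (Fin n) (PP n) :=
    Matrix.of fun a b => (X (a, b) : PP n) with hG
  have hminor : ∀ ρ κ : Fin (r + 1) → Fin n, (G.submatrix ρ κ).det ∈ I := fun ρ κ =>
    Ideal.subset_span (Or.inl ⟨ρ, κ, rfl⟩)
  have hsym : ∀ a b : Fin n, (X (a, b) - X (b, a) : PP n) ∈ I := fun a b =>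
    Ideal.subset_span (Or.inr ⟨a, b, rfl⟩)
  set N := G.submatrix ρ₀ κ₀ with hN
  have hNab : ∀ a b, N a b = X (ρ₀ a, κ₀ b) := fun a b => rfl
  have key1 : (∑ t : Fin n, G t s * pderiv (t, i) N.det) ∈ I := by
    have : (∑ t : Fin n, G t s * pderiv (t, i) N.det)
        = ∑ b, ∑ t, G t s * (N.updateCol b fun a => pderiv (t, i) (N a b)).det := by
      rw [Finset.sum_comm]
      refine Finset.sum_congr rfl fun t _ => ?_
      rw [pderiv_det_col, Finset.mul_sum]
    rw [this]
    refine Ideal.sum_mem _ fun b _ => ?_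
    by_cases hb : κ₀ b = i
    · have hstep : ∀ t : Fin n, G t s * (N.updateCol b fun a => pderiv (t, i) (N a b)).det
          = (N.updateCol b ((G t s) • fun a => pderiv (t, i) (N a b))).det := fun t =>
        (Matrix.det_updateCol_smul N b (G t s) _).symm
      rw [Finset.sum_congr rfl fun t _ => hstep t, ← det_updateCol_sum']
      have hcol : (∑ t : Fin n, (G t s) • fun a => pderiv (t, i) (N a b))
          = fun a => (X (ρ₀ a, s) : PP n) := by
        funext a
        simp only [Finset.sum_apply, Pi.smul_apply, smul_eq_mul, hNab, pderiv_X,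
          Pi.single_apply, Prod.mk.injEq, hb]
        simp [mul_ite, Finset.sum_ite_eq, hG]
      rw [hcol]
      have : N.updateCol b (fun a => (X (ρ₀ a, s) : PP n))
          = G.submatrix ρ₀ (Function.update κ₀ b s) := by
        ext a b'
        rw [Matrix.updateCol_apply]
        simp only [Matrix.submatrix_apply, Matrix.of_apply, Function.update_apply, hG]
        split_ifs <;> rfl
      rw [this]
      exact hminor _ _
    · refine Ideal.sum_mem _ fun t _ => ?_
      have : (N.updateCol b fun a => pderiv (t, i) (N a b)).det = 0 := by
        refine Matrix.det_eq_zero_of_column_eq_zero b fun a => ?_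
        rw [Matrix.updateCol_self, hNab, pderiv_X, Pi.single_apply,
          if_neg (by simp [Prod.ext_iff]; tauto)]
      rw [this, mul_zero]
      exact I.zero_mem
  have key2 : (∑ t : Fin n, G t s * pderiv (i, t) N.det) ∈ I := by
    have : (∑ t : Fin n, G t s * pderiv (i, t) N.det)
        = ∑ a, ∑ t, G t s * (N.updateRow a fun b => pderiv (i, t) (N a b)).det := by
      rw [Finset.sum_comm]
      refine Finset.sum_congr rfl fun t _ => ?_
      rw [pderiv_det_row, Finset.mul_sum]
    rw [this]
    refine Ideal.sum_mem _ fun a _ => ?_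
    by_cases ha : ρ₀ a = i
    · have hstep : ∀ t : Fin n, G t s * (N.updateRow a fun b => pderiv (i, t) (N a b)).det
          = (N.updateRow a ((G t s) • fun b => pderiv (i, t) (N a b))).det := fun t =>
        (Matrix.det_updateRow_smul N a (G t s) _).symm
      rw [Finset.sum_congr rfl fun t _ => hstep t, ← det_updateRow_sum']
      have hrow : (∑ t : Fin n, (G t s) • fun b => pderiv (i, t) (N a b))
          = fun b => (X (κ₀ b, s) : PP n) := by
        funext b
        simp only [Finset.sum_apply, Pi.smul_apply, smul_eq_mul, hNab, pderiv_X,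
          Pi.single_apply, Prod.mk.injEq, ha]
        simp [mul_ite, Finset.sum_ite_eq, hG]
      rw [hrow]
      have hsplit : (fun b => (X (κ₀ b, s) : PP n))
          = (fun b => (X (s, κ₀ b) : PP n)) + fun b => (X (κ₀ b, s) - X (s, κ₀ b) : PP n) := by
        funext b; simp
      rw [hsplit, Matrix.det_updateRow_add]
      refine Ideal.add_mem _ ?_ ?_
      · have : N.updateRow a (fun b => (X (s, κ₀ b) : PP n))
            = G.submatrix (Function.update ρ₀ a s) κ₀ := by
          ext a' b'
          rw [Matrix.updateRow_apply]
          simp only [Matrix.submatrix_apply, Matrix.of_apply, Function.update_apply, hG]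
          split_ifs <;> rfl
        rw [this]
        exact hminor _ _
      · exact det_mem_of_row _ a (fun b => by
          rw [Matrix.updateRow_self]; exact hsym _ _)
    · refine Ideal.sum_mem _ fun t _ => ?_
      have : (N.updateRow a fun b => pderiv (i, t) (N a b)).det = 0 := by
        refine Matrix.det_eq_zero_of_row_eq_zero a fun b => ?_
        rw [Matrix.updateRow_self, hNab, pderiv_X, Pi.single_apply,
          if_neg (by simp [Prod.ext_iff]; tauto)]
      rw [this, mul_zero]
      exact I.zero_mem
  have := Ideal.add_mem I key1 key2
  convert this using 2
  rw [← Finset.sum_add_distrib]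
  exact Finset.sum_congr rfl fun t _ => by ring
end

section
/- For M a symmetric n×n complex matrix, the fiber of the set C = {(A,B) : A ∈ S_r, B symmetric, rank B ≤ n−r, AB = 0} over A = M is isomorphic to the set of symmetric bilinear forms of rank at most n−r on the kernel of M, whenever ker M ∩ im M = 0; in particular if rank M = r, the fiber is the full set of symmetric matrices of rank ≤ n−r on the (n−r)-dimensional kernel. -/
open Matrix

/-!
A symmetric `B` with `M * B = 0` has all its columns, hence (by symmetry) all its rows, in
`ker M`. Choosing a matrix `K` whose columns form a basis of `ker M` together with a left
inverse `L`, every such `B` is therefore the congruence `K * C * Kᵀ` of the symmetric matrix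
`C = L * B * Lᵀ`, and `C ↦ K * C * Kᵀ`, `B ↦ L * B * Lᵀ` are mutually inverse linear maps.
Both are products with other matrices, so neither can raise the rank.
-/

namespace Matrix

section Congruence

variable {R : Type*} [CommRing R] {ι κ μ : Type*}

variable (R κ) in
def symmSubmodule : Submodule R (Matrix κ κ R) where
  carrier := {A | A.IsSymm}
  add_mem' := IsSymm.add
  zero_mem' := isSymm_zero
  smul_mem' c _ h := h.smul c

theorem IsSymm.mul_mul_transpose [Fintype κ] {A : Matrix κ κ R} (hA : A.IsSymm)
    (K : Matrix ι κ R) : (K * A * Kᵀ).IsSymm := by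
  rw [IsSymm, transpose_mul, transpose_mul, transpose_transpose, hA.eq, Matrix.mul_assoc]

variable [Fintype ι]

def symmRightAnnihilator (M : Matrix μ ι R) : Submodule R (Matrix ι ι R) where
  carrier := {B | B.IsSymm ∧ M * B = 0}
  add_mem' ha hb := ⟨ha.1.add hb.1, by rw [Matrix.mul_add, ha.2, hb.2, add_zero]⟩
  zero_mem' := ⟨isSymm_zero, Matrix.mul_zero M⟩
  smul_mem' c _ h := ⟨h.1.smul c, by rw [Matrix.mul_smul, h.2, smul_zero]⟩

variable [Fintype κ] [DecidableEq κ] {K : Matrix ι κ R} {L : Matrix κ ι R}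

theorem mul_mul_eq_self_of_range_le (hLK : L * K = 1) {ν : Type*} [Fintype ν]
    {B : Matrix ι ν R} (hB : LinearMap.range B.mulVecLin ≤ LinearMap.range K.mulVecLin) :
    K * (L * B) = B := by
  refine mulVec_injective (funext fun v => ?_)
  obtain ⟨c, hc⟩ : ∃ c, K *ᵥ c = B *ᵥ v := hB ⟨v, rfl⟩
  rw [← mulVec_mulVec, ← mulVec_mulVec, ← hc, mulVec_mulVec c L K, hLK, one_mulVec]

theorem IsSymm.mul_mul_transpose_cancel_of_range_le (hLK : L * K = 1) {B : Matrix ι ι R}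
    (hB : B.IsSymm) (hBK : LinearMap.range B.mulVecLin ≤ LinearMap.range K.mulVecLin) :
    K * (L * B * Lᵀ) * Kᵀ = B := by
  have hKLB := mul_mul_eq_self_of_range_le hLK hBK
  calc K * (L * B * Lᵀ) * Kᵀ = K * (L * B) * (Lᵀ * Kᵀ) := by simp only [Matrix.mul_assoc]
    _ = B * (Lᵀ * Kᵀ) := by rw [hKLB]
    _ = (K * (L * B))ᵀ := by rw [transpose_mul, transpose_mul, hB.eq, Matrix.mul_assoc]
    _ = B := by rw [hKLB, hB.eq]

theorem mul_mul_transpose_cancel_left (hLK : L * K = 1) (C : Matrix κ κ R) :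
    L * (K * C * Kᵀ) * Lᵀ = C := by
  calc L * (K * C * Kᵀ) * Lᵀ = L * K * C * (L * K)ᵀ := by
        simp only [transpose_mul, Matrix.mul_assoc]
    _ = C := by rw [hLK, transpose_one, Matrix.one_mul, Matrix.mul_one]

theorem rank_mul_mul_transpose_of_mul_eq_one [StrongRankCondition R] (hLK : L * K = 1)
    (C : Matrix κ κ R) : (K * C * Kᵀ).rank = C.rank := by
  refine le_antisymm ((rank_mul_le_left _ _).trans (rank_mul_le_right _ _)) ?_
  calc C.rank = (L * (K * C * Kᵀ) * Lᵀ).rank := by rw [mul_mul_transpose_cancel_left hLK]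
    _ ≤ (K * C * Kᵀ).rank := (rank_mul_le_left _ _).trans (rank_mul_le_right _ _)

theorem range_mulVecLin_le_ker_iff {ν : Type*} [Fintype ν] {M : Matrix μ ι R}
    {B : Matrix ι ν R} :
    LinearMap.range B.mulVecLin ≤ LinearMap.ker M.mulVecLin ↔ M * B = 0 := by
  classical
  rw [LinearMap.range_le_ker_iff, ← mulVecLin_mul, ← toLin'_apply', LinearEquiv.map_eq_zero_iff]

def symmRightAnnihilatorEquiv (M : Matrix μ ι R) (hLK : L * K = 1)
    (hK : LinearMap.range K.mulVecLin = LinearMap.ker M.mulVecLin) :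
    symmRightAnnihilator M ≃ₗ[R] symmSubmodule R κ where
  toFun B := ⟨L * (B : Matrix ι ι R) * Lᵀ, B.2.1.mul_mul_transpose L⟩
  invFun C := ⟨K * (C : Matrix κ κ R) * Kᵀ, C.2.mul_mul_transpose K, by
    rw [← Matrix.mul_assoc, ← Matrix.mul_assoc, range_mulVecLin_le_ker_iff.1 hK.le,
      Matrix.zero_mul, Matrix.zero_mul]⟩
  map_add' B B' := Subtype.ext (by simp only [Submodule.coe_add, Matrix.mul_add, Matrix.add_mul])
  map_smul' c B := Subtype.ext (by simp [Matrix.mul_smul, Matrix.smul_mul])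
  left_inv B := Subtype.ext <| B.2.1.mul_mul_transpose_cancel_of_range_le hLK <|
    hK ▸ range_mulVecLin_le_ker_iff.2 B.2.2
  right_inv C := Subtype.ext <| mul_mul_transpose_cancel_left hLK C

theorem rank_symmRightAnnihilatorEquiv [StrongRankCondition R] (M : Matrix μ ι R)
    (hLK : L * K = 1) (hK : LinearMap.range K.mulVecLin = LinearMap.ker M.mulVecLin)
    (B : symmRightAnnihilator M) :
    (symmRightAnnihilatorEquiv M hLK hK B : Matrix κ κ R).rank = (B : Matrix ι ι R).rank := by
  conv_rhs => rw [← (symmRightAnnihilatorEquiv M hLK hK).symm_apply_apply B]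
  exact (rank_mul_mul_transpose_of_mul_eq_one hLK _).symm

end Congruence

section Field

variable {𝕜 : Type*} [Field 𝕜] {ι : Type*} [Fintype ι]

theorem finrank_ker_mulVecLin {μ : Type*} (M : Matrix μ ι 𝕜) :
    Module.finrank 𝕜 (LinearMap.ker M.mulVecLin) = Fintype.card ι - M.rank := by
  have h := M.mulVecLin.finrank_range_add_finrank_ker
  rw [Module.finrank_fintype_fun_eq_card] at h
  rw [rank]
  omega

theorem exists_mul_eq_one_and_range_mulVecLin_eq (W : Submodule 𝕜 (ι → 𝕜)) {m : ℕ}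
    (hW : Module.finrank 𝕜 W = m) :
    ∃ (K : Matrix ι (Fin m) 𝕜) (L : Matrix (Fin m) ι 𝕜),
      L * K = 1 ∧ LinearMap.range K.mulVecLin = W := by
  classical
  let f : (Fin m → 𝕜) →ₗ[𝕜] ι → 𝕜 :=
    W.subtype ∘ₗ (Module.finBasisOfFinrankEq 𝕜 W hW).equivFun.symm.toLinearMap
  have hf : LinearMap.ker f = ⊥ := by
    simp only [f, LinearMap.ker_comp, Submodule.ker_subtype, Submodule.comap_bot,
      LinearEquiv.ker]
  obtain ⟨g, hgf⟩ := f.exists_leftInverse_of_injective hf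
  refine ⟨LinearMap.toMatrix' f, LinearMap.toMatrix' g, ?_, ?_⟩
  · rw [← LinearMap.toMatrix'_comp, hgf, LinearMap.toMatrix'_id]
  · rw [← toLin'_apply', toLin'_toMatrix', LinearMap.range_comp_of_range_eq_top _
      (LinearEquiv.range _), Submodule.range_subtype]

end Field

end Matrix

theorem stmt17_general (n s : ℕ)
    (M : Matrix (Fin n) (Fin n) ℂ) (hs : M.rank = s) :
    ∃ (U : Submodule ℂ (Matrix (Fin n) (Fin n) ℂ))
      (V : Submodule ℂ (Matrix (Fin (n - s)) (Fin (n - s)) ℂ)),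
      (U : Set (Matrix (Fin n) (Fin n) ℂ)) = {B | B.IsSymm ∧ M * B = 0} ∧
      (V : Set (Matrix (Fin (n - s)) (Fin (n - s)) ℂ)) = {C | C.IsSymm} ∧
      ∃ e : U ≃ₗ[ℂ] V, ∀ B : U,
        ((e B : Matrix (Fin (n - s)) (Fin (n - s)) ℂ)).rank
          = ((B : Matrix (Fin n) (Fin n) ℂ)).rank := by
  have hdim : Module.finrank ℂ (LinearMap.ker M.mulVecLin) = n - s := by
    rw [finrank_ker_mulVecLin, Fintype.card_fin, hs]
  obtain ⟨K, L, hLK, hK⟩ := exists_mul_eq_one_and_range_mulVecLin_eq _ hdim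
  exact ⟨_, _, rfl, rfl, symmRightAnnihilatorEquiv M hLK hK,
    rank_symmRightAnnihilatorEquiv M hLK hK⟩

/-- For a symmetric `n × n` complex matrix `M` of rank `s` with
`ker M ∩ im M = 0`, the fiber `{B symmetric : M·B = 0}` of the incidence variety
`C = {(A,B) : A ∈ S_r, B symmetric, rank B ≤ n−r, AB = 0}` over `A = M` is
linearly isomorphic, by a rank-preserving linear equivalence, to the space of
symmetric `(n-s) × (n-s)` matrices (symmetric bilinear forms on `ker M`); in
particular matrices of rank at most `n - r` correspond to matrices of rank at
most `n - r` on the `(n-s)`-dimensional kernel. -/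
theorem stmt17 (n r s : ℕ) (hrn : r ≤ n)
    (M : Matrix (Fin n) (Fin n) ℂ) (hM : M.IsSymm) (hs : M.rank = s)
    (hker : LinearMap.ker M.mulVecLin ⊓ LinearMap.range M.mulVecLin = ⊥) :
    ∃ (U : Submodule ℂ (Matrix (Fin n) (Fin n) ℂ))
      (V : Submodule ℂ (Matrix (Fin (n - s)) (Fin (n - s)) ℂ)),
      (U : Set (Matrix (Fin n) (Fin n) ℂ)) = {B | B.IsSymm ∧ M * B = 0} ∧
      (V : Set (Matrix (Fin (n - s)) (Fin (n - s)) ℂ)) = {C | C.IsSymm} ∧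
      ∃ e : U ≃ₗ[ℂ] V, ∀ B : U,
        ((e B : Matrix (Fin (n - s)) (Fin (n - s)) ℂ)).rank
          = ((B : Matrix (Fin n) (Fin n) ℂ)).rank :=
  stmt17_general n s M hs
end
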